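/- Let M be a C-algebra with T, F, U, and define Ann(a) = {α ∈ M : (α ∧ a) ∨ (¬α ∧ a) = U}. Then for all a, b ∈ M: b ∈ Ann(a) if and only if a ∈ Ann(b). -/

import Mathlib

/-- A C-algebra (Guzmán–Squier): algebra of McCarthy's three-valued conditional logic. -/
class CAlgebra (M : Type*) where
  or : M → M → M
  and : M → M → M
  neg : M → M
  c1 : ∀ a, neg (neg a) = a
  c2 : ∀ a b, neg (and a b) = or (neg a) (neg b)
  c3 : ∀ a b c, and (and a b) c = and a (and b c)
  c4 : ∀ a b c, and a (or b c) = or (and a b) (and a c)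
  c5 : ∀ a b c, and (or a b) c = or (and a c) (and (neg a) (and b c))
  c6 : ∀ a b, or a (and a b) = a
  c7 : ∀ a b, or (and a b) (and b a) = or (and b a) (and a b)

/-- A C-algebra with constants T, F, U. -/
class CAlgebraTFU (M : Type*) extends CAlgebra M where
  T : M
  F : M
  U : M
  T_and : ∀ a : M, and T a = a
  and_T : ∀ a : M, and a T = a
  F_or : ∀ a : M, or F a = a
  or_F : ∀ a : M, or a F = a
  neg_U : neg U = U
  U_and : ∀ a : M, and U a = U
  U_or : ∀ a : M, or U a = U
  F_and : ∀ a : M, and F a = F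
  T_or : ∀ a : M, or T a = T


/-! `b ∈ Ann(a)` says `(b ∨ ¬b) ∧ a = U`. From this, distributivity gives `(b ∨ ¬b) ∧ (a ∨ ¬a) = U`,
and the left-regularity law `(x ∧ y) ∧ x = x ∧ y` lets the two definedness factors be swapped, because
`(a ∨ ¬a) ∧ U = U`. Since `(b ∨ ¬b) ∧ b = b`, we get `(a ∨ ¬a) ∧ b = ((a ∨ ¬a) ∧ (b ∨ ¬b)) ∧ b = U ∧ b = U`. -/

namespace CAlgebra

open CAlgebraTFU

variable {M : Type*}

section CAlgebra

variable [CAlgebra M]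

theorem neg_or (a b : M) : neg (or a b) = and (neg a) (neg b) := by
  conv_lhs => rw [← c1 a, ← c1 b, ← c2, c1]

theorem and_or_self (a b : M) : and a (or a b) = a := by
  have h : neg (and a (or a b)) = neg a := by rw [c2, neg_or, c6]
  rw [← c1 (and a (or a b)), h, c1]

theorem and_idem (a : M) : and a a = a := by
  calc and a a = and a (or a (and a a)) := by rw [c6]
    _ = a := and_or_self a (and a a)

theorem and_and_self_left (x y : M) : and (and x y) x = and x y := by
  have hxxy : and x (and x y) = and x y := by rw [← c3, and_idem]
  have hor : or (and (and x y) x) (and x y) = and x y := by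
    have h := c7 (and x y) x
    rw [hxxy] at h
    rw [h, c6]
  rw [← and_or_self (and (and x y) x) (and x y), hor, c3, hxxy, and_idem]

/-- `x ∨ ¬x`: in the three-valued model it is `T` where `x` is defined and `U` elsewhere. -/
def defined (x : M) : M := or x (neg x)

/-- The conditional `x⟦y,y⟧` only depends on whether `x` is defined. -/
theorem defined_and (x y : M) : and (defined x) y = or (and x y) (and (neg x) y) := by
  rw [defined, c5, ← c3, and_idem]

theorem or_neg_and_self (x : M) : or x (and (neg x) x) = x := by
  calc or x (and (neg x) x) = and (or x (and x x)) x := by simp only [c5, and_idem]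
    _ = x := by rw [c6, and_idem]

theorem defined_and_self (x : M) : and (defined x) x = x := by
  rw [defined_and, and_idem, or_neg_and_self]

end CAlgebra

section CAlgebraTFU

variable [CAlgebraTFU M]

theorem or_and_U_U (x : M) : or (and x U) U = U := by
  have h := c7 x (U : M)
  rwa [U_and, U_or] at h

theorem or_U_and_U (x : M) : and (or x U) U = U := by
  have h := congrArg neg (or_and_U_U (neg x))
  rwa [neg_or, c2, c1, neg_U] at h

theorem defined_and_U (x : M) : and (defined x) U = U := by
  rw [defined_and]
  calc _ = and (or x U) U := by rw [c5, U_and]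
    _ = U := or_U_and_U x

theorem defined_and_eq_U_symm {a b : M} (h : and (defined b) a = U) :
    and (defined a) b = U := by
  have hba : and (defined b) (defined a) = U :=
    show and (defined b) (or a (neg a)) = U by rw [c4, h, U_or]
  have hab : and (defined a) (defined b) = U := by
    rw [← and_and_self_left, c3, hba, defined_and_U]
  calc and (defined a) b = and (defined a) (and (defined b) b) := by rw [defined_and_self]
    _ = U := by rw [← c3, hab, U_and]

end CAlgebraTFU

end CAlgebra

open CAlgebra CAlgebraTFU in
/-- `b ∈ Ann(a) ↔ a ∈ Ann(b)`, where `Ann(a) = {α : α⟦a,a⟧ = U}` and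
`α⟦β,γ⟧ = (α ∧ β) ∨ (¬α ∧ γ)`. -/
theorem stmt16 {M : Type*} [CAlgebraTFU M] (a b : M) :
    or (and b a) (and (neg b) a) = (U : M) ↔
      or (and a b) (and (neg a) b) = (U : M) := by
  rw [← defined_and, ← defined_and]
  exact ⟨defined_and_eq_U_symm, defined_and_eq_U_symm⟩
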